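/- arXiv:2406.05256 — 4 statements merged into one kernel-verified Lean document; each statement's English description precedes it below -/
import Mathlib

section
/- Let N, d ≥ 1, let P be a nonempty compact subset of the probability simplex Δ_N, let Q : {0,1}^d × {1,…,N} → ℝ, and let cut coefficients (α_i, β_i) ∈ ℝ^d × ℝ, i = 1,…,N, be valid for Q. Fix x̂ ∈ {0,1}^d and define, for each coordinate j ∈ {1,…,d}, π_j := inf_{p∈P} ∑_{i=1}^N p_i α_{i,j} if x̂_j = 0 and π_j := sup_{p∈P} ∑_{i=1}^N p_i α_{i,j} if x̂_j = 1, and define γ := inf_{p∈P} ∑_{i=1}^N p_i (α_iᵀ x̂ + β_i). Then for every x ∈ {0,1}^d one has πᵀ(x − x̂) + γ ≤ inf_{p∈P} ∑_{i=1}^N p_i Q(x,i); that is, the cutting-plane function φ^C(x) := πᵀ(x − x̂) + γ is a lower bound for the optimistic expected cost-to-go function Q^RR(x). -/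
/-!
For a fixed `p ∈ P`, the valid cuts average to an affine minorant `x ↦ ∑ᵢ pᵢ (αᵢᵀx + βᵢ)` of
`x ↦ ∑ᵢ pᵢ Q(x,i)` on binary points. Expanding it around `xhat`, its constant term is at least `γ`
and its slope `cⱼ = ∑ᵢ pᵢ αᵢⱼ` lies above `πⱼ` where `xhat_j = 0` (so `xⱼ - xhat_j ≥ 0`) and below
`πⱼ` where `xhat_j = 1` (so `xⱼ - xhat_j ≤ 0`); hence `φ^C` lies below every such minorant, and
therefore below their infimum over `P`.
-/

open Finset

section CuttingPlane

variable {ι κ : Type*} [Fintype ι] [Fintype κ]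

lemma sum_mul_affine_eq_sum_mul_sub_add (p : ι → ℝ) (α : ι → κ → ℝ) (β : ι → ℝ) (x xhat : κ → ℝ) :
    ∑ i, p i * ((∑ j, α i j * x j) + β i) =
      (∑ j, (∑ i, p i * α i j) * (x j - xhat j)) + ∑ i, p i * ((∑ j, α i j * xhat j) + β i) := by
  simp only [sum_mul, mul_sub, mul_sum, sum_sub_distrib, mul_add, sum_add_distrib, mul_assoc]
  rw [sum_comm (f := fun j i => p i * (α i j * x j)), sum_comm (f := fun j i => p i * (α i j * xhat j))]
  ring

lemma mul_sub_le_mul_sub_of_binary {a b x xhat : ℝ} (hx : x = 0 ∨ x = 1)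
    (hxhat : xhat = 0 ∨ xhat = 1) (h0 : xhat = 0 → a ≤ b) (h1 : xhat = 1 → b ≤ a) :
    a * (x - xhat) ≤ b * (x - xhat) := by
  rcases hxhat with rfl | rfl
  · exact mul_le_mul_of_nonneg_right (h0 rfl) (by rcases hx with rfl | rfl <;> norm_num)
  · exact mul_le_mul_of_nonpos_right (h1 rfl) (by rcases hx with rfl | rfl <;> norm_num)

lemma sInf_image_le_of_isCompact {P : Set (ι → ℝ)} (hP : IsCompact P) (g : ι → ℝ) {p : ι → ℝ}
    (hp : p ∈ P) : sInf ((fun q : ι → ℝ => ∑ i, q i * g i) '' P) ≤ ∑ i, p i * g i :=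
  csInf_le (hP.image (by fun_prop)).bddBelow (Set.mem_image_of_mem _ hp)

lemma le_sSup_image_of_isCompact {P : Set (ι → ℝ)} (hP : IsCompact P) (g : ι → ℝ) {p : ι → ℝ}
    (hp : p ∈ P) : ∑ i, p i * g i ≤ sSup ((fun q : ι → ℝ => ∑ i, q i * g i) '' P) :=
  le_csSup (hP.image (by fun_prop)).bddAbove (Set.mem_image_of_mem _ hp)

end CuttingPlane

theorem drr_cutting_plane_lower_bound_general
    {N d : ℕ}
    (P : Set (Fin N → ℝ)) (hPne : P.Nonempty) (hPcomp : IsCompact P)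
    (hPsimplex : ∀ p ∈ P, (∀ i, 0 ≤ p i) ∧ (∑ i, p i) = 1)
    (Q : (Fin d → ℝ) → Fin N → ℝ)
    (α : Fin N → Fin d → ℝ) (β : Fin N → ℝ)
    (hvalid : ∀ x : Fin d → ℝ, (∀ j, x j = 0 ∨ x j = 1) →
      ∀ i, (∑ j, α i j * x j) + β i ≤ Q x i)
    (xhat : Fin d → ℝ) (hxhat : ∀ j, xhat j = 0 ∨ xhat j = 1)
    (π : Fin d → ℝ)
    (hπ0 : ∀ j, xhat j = 0 → π j = sInf ((fun p : Fin N → ℝ => ∑ i, p i * α i j) '' P))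
    (hπ1 : ∀ j, xhat j = 1 → π j = sSup ((fun p : Fin N → ℝ => ∑ i, p i * α i j) '' P))
    (γ : ℝ)
    (hγ : γ = sInf ((fun p : Fin N → ℝ =>
      ∑ i, p i * ((∑ j, α i j * xhat j) + β i)) '' P)) :
    ∀ x : Fin d → ℝ, (∀ j, x j = 0 ∨ x j = 1) →
      (∑ j, π j * (x j - xhat j)) + γ ≤
        sInf ((fun p : Fin N → ℝ => ∑ i, p i * Q x i) '' P) := by
  intro x hx
  refine le_csInf (hPne.image _) ?_
  rintro _ ⟨p, hp, rfl⟩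
  have hslope : ∀ j, π j * (x j - xhat j) ≤ (∑ i, p i * α i j) * (x j - xhat j) := fun j =>
    mul_sub_le_mul_sub_of_binary (hx j) (hxhat j)
      (fun h => (hπ0 j h).trans_le (sInf_image_le_of_isCompact hPcomp (α · j) hp))
      (fun h => (hπ1 j h).symm ▸ le_sSup_image_of_isCompact hPcomp (α · j) hp)
  calc (∑ j, π j * (x j - xhat j)) + γ
      ≤ (∑ j, (∑ i, p i * α i j) * (x j - xhat j)) + ∑ i, p i * ((∑ j, α i j * xhat j) + β i) :=
        add_le_add (sum_le_sum fun j _ => hslope j) (hγ ▸ sInf_image_le_of_isCompact hPcomp _ hp)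
    _ = ∑ i, p i * ((∑ j, α i j * x j) + β i) := (sum_mul_affine_eq_sum_mul_sub_add p α β x xhat).symm
    _ ≤ ∑ i, p i * Q x i :=
        sum_le_sum fun i _ => mul_le_mul_of_nonneg_left (hvalid x hx i) ((hPsimplex p hp).1 i)

/-- The cutting-plane function `φ^C(x) = πᵀ(x − xhat) + γ` is a lower bound for
the optimistic expected cost-to-go function `Q^RR(x) = inf_{p ∈ P} ∑ i, p i * Q x i`. -/
theorem drr_cutting_plane_lower_bound
    {N d : ℕ} (hN : 1 ≤ N) (hd : 1 ≤ d)
    (P : Set (Fin N → ℝ)) (hPne : P.Nonempty) (hPcomp : IsCompact P)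
    (hPsimplex : ∀ p ∈ P, (∀ i, 0 ≤ p i) ∧ (∑ i, p i) = 1)
    (Q : (Fin d → ℝ) → Fin N → ℝ)
    (α : Fin N → Fin d → ℝ) (β : Fin N → ℝ)
    (hvalid : ∀ x : Fin d → ℝ, (∀ j, x j = 0 ∨ x j = 1) →
      ∀ i, (∑ j, α i j * x j) + β i ≤ Q x i)
    (xhat : Fin d → ℝ) (hxhat : ∀ j, xhat j = 0 ∨ xhat j = 1)
    (π : Fin d → ℝ)
    (hπ0 : ∀ j, xhat j = 0 → π j = sInf ((fun p : Fin N → ℝ => ∑ i, p i * α i j) '' P))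
    (hπ1 : ∀ j, xhat j = 1 → π j = sSup ((fun p : Fin N → ℝ => ∑ i, p i * α i j) '' P))
    (γ : ℝ)
    (hγ : γ = sInf ((fun p : Fin N → ℝ =>
      ∑ i, p i * ((∑ j, α i j * xhat j) + β i)) '' P)) :
    ∀ x : Fin d → ℝ, (∀ j, x j = 0 ∨ x j = 1) →
      (∑ j, π j * (x j - xhat j)) + γ ≤
        sInf ((fun p : Fin N → ℝ => ∑ i, p i * Q x i) '' P) :=
  drr_cutting_plane_lower_bound_general P hPne hPcomp hPsimplex Q α β hvalid xhat hxhat π hπ0 hπ1 γ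
    hγ
end

section
/- Let N, d ≥ 1, let P be a nonempty compact subset of the probability simplex Δ_N, let α_i ∈ ℝ^d and β_i ∈ ℝ for i ∈ {1,…,N}, and fix x ∈ {0,1}^d. Define φ^B(x) := inf { ∑_{i=1}^N p_i θ_i : p ∈ P, θ ∈ ℝ^N, θ_i ≥ α_iᵀ x + β_i for all i } and φ^R(x) := inf { ∑_{i=1}^N θ̄_i : p ∈ P, θ̄ ∈ ℝ^N, η_1,…,η_N ∈ ℝ^d, θ̄_i ≥ α_iᵀ η_i + β_i p_i for all i, and for all i and j: η_{i,j} ≤ x_j, η_{i,j} ≤ p_i, η_{i,j} ≥ p_i + x_j − 1, η_{i,j} ≥ 0 }. Then φ^R(x) = φ^B(x), and both are equal to inf_{p∈P} ∑_{i=1}^N p_i (α_iᵀ x + β_i). -/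
/-!
For a binary `x` the McCormick inequalities pin `η_{ij}` down to the product `p_i x_j`, so a
feasible point of the reformulation is exactly a point of `P` with `θ̄_i ≥ p_i (α_iᵀ x + β_i)`.
In the bilinear problem the weights `p_i` are nonnegative, so the optimal `θ_i` is
`α_iᵀ x + β_i`. In both cases the set of values and the image of `P` under
`p ↦ ∑ p_i (α_iᵀ x + β_i)` are coinitial in each other, so their infima agree.
-/

open Finset

lemma mcCormick_mul {p x : ℝ} (hp₀ : 0 ≤ p) (hp₁ : p ≤ 1) (hx₀ : 0 ≤ x) (hx₁ : x ≤ 1) :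
    p * x ≤ x ∧ p * x ≤ p ∧ p + x - 1 ≤ p * x ∧ 0 ≤ p * x :=
  ⟨by nlinarith, by nlinarith, by nlinarith, mul_nonneg hp₀ hx₀⟩

lemma eq_mul_of_mcCormick {p x η : ℝ} (hx : x = 0 ∨ x = 1) (h_le_x : η ≤ x) (h_le_p : η ≤ p)
    (h_ge : p + x - 1 ≤ η) (h_nonneg : 0 ≤ η) : η = p * x := by
  rcases hx with rfl | rfl
  · rw [mul_zero]; exact le_antisymm h_le_x h_nonneg
  · rw [mul_one]; exact le_antisymm h_le_p (by linarith)

lemma le_one_of_sum_eq_one {ι : Type*} [Fintype ι] {p : ι → ℝ} (hp : ∀ i, 0 ≤ p i)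
    (hsum : ∑ i, p i = 1) (i : ι) : p i ≤ 1 :=
  hsum ▸ single_le_sum (fun k _ => hp k) (mem_univ i)

lemma sInf_bilinear_eq_sInf_image {ι : Type*} [Fintype ι] (P : Set (ι → ℝ))
    (hP : ∀ p ∈ P, ∀ i, 0 ≤ p i) (c : ι → ℝ) :
    sInf {v : ℝ | ∃ p ∈ P, ∃ θ : ι → ℝ, (∀ i, c i ≤ θ i) ∧ v = ∑ i, p i * θ i} =
      sInf ((fun p : ι → ℝ => ∑ i, p i * c i) '' P) := by
  refine csInf_eq_csInf_of_forall_exists_le ?_ ?_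
  · rintro v ⟨p, hp, θ, hθ, rfl⟩
    exact ⟨_, ⟨p, hp, rfl⟩, sum_le_sum fun i _ => mul_le_mul_of_nonneg_left (hθ i) (hP p hp i)⟩
  · rintro v ⟨p, hp, rfl⟩
    exact ⟨_, ⟨p, hp, c, fun _ => le_rfl, rfl⟩, le_rfl⟩

lemma sInf_mcCormick_eq_sInf_image {N d : ℕ} (P : Set (Fin N → ℝ))
    (hP : ∀ p ∈ P, ∀ i, 0 ≤ p i ∧ p i ≤ 1) (α : Fin N → Fin d → ℝ) (β : Fin N → ℝ)
    (x : Fin d → ℝ) (hx : ∀ j, x j = 0 ∨ x j = 1) :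
    sInf {v : ℝ | ∃ p ∈ P, ∃ θbar : Fin N → ℝ, ∃ η : Fin N → Fin d → ℝ,
        (∀ i, (∑ j, α i j * η i j) + β i * p i ≤ θbar i) ∧
        (∀ i j, η i j ≤ x j) ∧ (∀ i j, η i j ≤ p i) ∧
        (∀ i j, p i + x j - 1 ≤ η i j) ∧ (∀ i j, 0 ≤ η i j) ∧
        v = ∑ i, θbar i} =
      sInf ((fun p : Fin N → ℝ => ∑ i, p i * ((∑ j, α i j * x j) + β i)) '' P) := by
  have linearize : ∀ (p : Fin N → ℝ) i,
      (∑ j, α i j * (p i * x j)) + β i * p i = p i * ((∑ j, α i j * x j) + β i) := by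
    intro p i
    rw [mul_add, mul_sum]
    congr 1
    · exact sum_congr rfl fun j _ => by ring
    · ring
  have hx_mem : ∀ j, 0 ≤ x j ∧ x j ≤ 1 := fun j => by rcases hx j with h | h <;> simp [h]
  refine csInf_eq_csInf_of_forall_exists_le ?_ ?_
  · rintro v ⟨p, hp, θbar, η, hθ, h_le_x, h_le_p, h_ge, h_nonneg, rfl⟩
    have hη : ∀ i j, η i j = p i * x j := fun i j =>
      eq_mul_of_mcCormick (hx j) (h_le_x i j) (h_le_p i j) (h_ge i j) (h_nonneg i j)
    refine ⟨_, ⟨p, hp, rfl⟩, sum_le_sum fun i _ => ?_⟩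
    simpa only [hη, linearize] using hθ i
  · rintro v ⟨p, hp, rfl⟩
    have hmc := fun i j =>
      mcCormick_mul (hP p hp i).1 (hP p hp i).2 (hx_mem j).1 (hx_mem j).2
    refine ⟨_, ⟨p, hp, fun i => p i * ((∑ j, α i j * x j) + β i), fun i j => p i * x j,
      fun i => (linearize p i).le, fun i j => (hmc i j).1, fun i j => (hmc i j).2.1,
      fun i j => (hmc i j).2.2.1, fun i j => (hmc i j).2.2.2, rfl⟩, le_rfl⟩

theorem drr_reformulation_eq_bilinear_general
    {N d : ℕ}
    (P : Set (Fin N → ℝ))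
    (hPsimplex : ∀ p ∈ P, (∀ i, 0 ≤ p i) ∧ (∑ i, p i) = 1)
    (α : Fin N → Fin d → ℝ) (β : Fin N → ℝ)
    (x : Fin d → ℝ) (hx : ∀ j, x j = 0 ∨ x j = 1) :
    sInf {v : ℝ | ∃ p ∈ P, ∃ θbar : Fin N → ℝ, ∃ η : Fin N → Fin d → ℝ,
        (∀ i, (∑ j, α i j * η i j) + β i * p i ≤ θbar i) ∧
        (∀ i j, η i j ≤ x j) ∧ (∀ i j, η i j ≤ p i) ∧
        (∀ i j, p i + x j - 1 ≤ η i j) ∧ (∀ i j, 0 ≤ η i j) ∧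
        v = ∑ i, θbar i} =
      sInf {v : ℝ | ∃ p ∈ P, ∃ θ : Fin N → ℝ,
        (∀ i, (∑ j, α i j * x j) + β i ≤ θ i) ∧ v = ∑ i, p i * θ i} ∧
    sInf {v : ℝ | ∃ p ∈ P, ∃ θ : Fin N → ℝ,
        (∀ i, (∑ j, α i j * x j) + β i ≤ θ i) ∧ v = ∑ i, p i * θ i} =
      sInf ((fun p : Fin N → ℝ => ∑ i, p i * ((∑ j, α i j * x j) + β i)) '' P) := by
  have hP_unit : ∀ p ∈ P, ∀ i, 0 ≤ p i ∧ p i ≤ 1 := fun p hp i =>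
    ⟨(hPsimplex p hp).1 i, le_one_of_sum_eq_one (hPsimplex p hp).1 (hPsimplex p hp).2 i⟩
  have bilinear := sInf_bilinear_eq_sInf_image P (fun p hp => (hPsimplex p hp).1)
    (fun i => (∑ j, α i j * x j) + β i)
  exact ⟨(sInf_mcCormick_eq_sInf_image P hP_unit α β x hx).trans bilinear.symm, bilinear⟩

/-- The McCormick reformulation-based value `φ^R(x)` equals the bilinear
value `φ^B(x)`, and both equal `inf_{p∈P} ∑ i, p i * (α_iᵀ x + β_i)`, for binary `x`. -/
theorem drr_reformulation_eq_bilinear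
    {N d : ℕ} (hN : 1 ≤ N) (hd : 1 ≤ d)
    (P : Set (Fin N → ℝ)) (hPne : P.Nonempty) (hPcomp : IsCompact P)
    (hPsimplex : ∀ p ∈ P, (∀ i, 0 ≤ p i) ∧ (∑ i, p i) = 1)
    (α : Fin N → Fin d → ℝ) (β : Fin N → ℝ)
    (x : Fin d → ℝ) (hx : ∀ j, x j = 0 ∨ x j = 1) :
    sInf {v : ℝ | ∃ p ∈ P, ∃ θbar : Fin N → ℝ, ∃ η : Fin N → Fin d → ℝ,
        (∀ i, (∑ j, α i j * η i j) + β i * p i ≤ θbar i) ∧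
        (∀ i j, η i j ≤ x j) ∧ (∀ i j, η i j ≤ p i) ∧
        (∀ i j, p i + x j - 1 ≤ η i j) ∧ (∀ i j, 0 ≤ η i j) ∧
        v = ∑ i, θbar i} =
      sInf {v : ℝ | ∃ p ∈ P, ∃ θ : Fin N → ℝ,
        (∀ i, (∑ j, α i j * x j) + β i ≤ θ i) ∧ v = ∑ i, p i * θ i} ∧
    sInf {v : ℝ | ∃ p ∈ P, ∃ θ : Fin N → ℝ,
        (∀ i, (∑ j, α i j * x j) + β i ≤ θ i) ∧ v = ∑ i, p i * θ i} =
      sInf ((fun p : Fin N → ℝ => ∑ i, p i * ((∑ j, α i j * x j) + β i)) '' P) :=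
  drr_reformulation_eq_bilinear_general P hPsimplex α β x hx
end

section
/- Let d_x, d_ω, K ≥ 1, let A, C be real d_ω × d_x matrices, c ∈ ℝ^{d_x}, let π^k ∈ ℝ^{d_x} and γ^k ∈ ℝ for k = 1,…,K, let l, u, ω^i ∈ ℝ^{d_ω}, let x_prev ∈ ℝ^{d_x}, and let n be a seminorm on ℝ^{d_ω}. Suppose ρ ≥ 0 and multipliers λ, μ, ν ∈ ℝ^{d_ω} with λ, μ, ν ≥ 0 and ζ ∈ ℝ^K with ζ ≥ 0 satisfy: Aᵀλ − ∑_{k=1}^K ζ_k π^k = c, ∑_{k=1}^K ζ_k = 1, and (λ − μ + ν)ᵀ w ≤ ρ · n(w) for all w ∈ ℝ^{d_ω} (the dual-norm condition ‖λ − μ + ν‖_* ≤ ρ). Then every (x, ω, θ) ∈ ℝ^{d_x} × ℝ^{d_ω} × ℝ satisfying the primal constraints A x ≥ ω − C x_prev, l ≤ ω ≤ u, and θ ≥ (π^k)ᵀ x + γ^k for all k, obeys the inequality ρ · n(ω − ω^i) + cᵀ x + θ ≥ (−λ)ᵀ (C x_prev) + μᵀ l − νᵀ u + (λ − μ + ν)ᵀ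 ω^i + ∑_{k=1}^K ζ_k γ^k. -/
/-!
Weak duality for the Lagrangian relaxation: multiply each primal constraint by its nonnegative
multiplier (λ on `A x ≥ ω − C x_prev`, μ on `ω ≥ l`, ν on `ω ≤ u`, the convex weights ζ on the
cuts) and add. Stationarity `Aᵀλ − Σ ζ_k π^k = c` makes the `x`-terms cancel against `cᵀx`, and
what is left of the `ω`-terms is `(λ − μ + ν)ᵀ(ω^i − ω)`, which the dual-norm condition bounds
by `ρ · n(ω − ω^i)`.
-/

open Matrix

theorem dotProduct_le_of_forall_le {κ R : Type*} [Fintype κ] [CommSemiring R] [PartialOrder R]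
    [IsOrderedRing R] {ζ a : κ → R} {θ : R} (hζ : 0 ≤ ζ) (hζsum : ∑ k, ζ k = 1)
    (ha : ∀ k, a k ≤ θ) : ζ ⬝ᵥ a ≤ θ :=
  calc ζ ⬝ᵥ a ≤ ζ ⬝ᵥ (θ • 1) :=
        dotProduct_le_dotProduct_of_nonneg_left (fun k => by simpa using ha k) hζ
    _ = θ := by rw [dotProduct_smul, dotProduct_one, hζsum, smul_eq_mul, mul_one]

theorem Seminorm.dotProduct_sub_le {m : Type*} [Fintype m] {N : Seminorm ℝ (m → ℝ)} {y : m → ℝ}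
    {ρ : ℝ} (hy : ∀ w, y ⬝ᵥ w ≤ ρ * N w) (v v' : m → ℝ) : y ⬝ᵥ (v' - v) ≤ ρ * N (v - v') :=
  map_sub_rev N v v' ▸ hy (v' - v)

theorem lagrangian_weak_duality {m d κ : Type*} [Fintype m] [Fintype d] [Fintype κ]
    (A C : Matrix m d ℝ) (P : Matrix κ d ℝ) (c xprev : d → ℝ) (γ : κ → ℝ) (l u ωi : m → ℝ)
    (N : Seminorm ℝ (m → ℝ)) (ρ : ℝ) (lam mu nu : m → ℝ) (ζ : κ → ℝ)
    (hlam : 0 ≤ lam) (hmu : 0 ≤ mu) (hnu : 0 ≤ nu) (hζ : 0 ≤ ζ)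
    (hstat : Aᵀ *ᵥ lam - ζ ᵥ* P = c) (hζsum : ∑ k, ζ k = 1)
    (hdual : ∀ w, (lam - mu + nu) ⬝ᵥ w ≤ ρ * N w)
    {x : d → ℝ} {ω : m → ℝ} {θ : ℝ} (hA : ω - C *ᵥ xprev ≤ A *ᵥ x) (hl : l ≤ ω) (hu : ω ≤ u)
    (hθ : ∀ k, (P *ᵥ x) k + γ k ≤ θ) :
    -lam ⬝ᵥ (C *ᵥ xprev) + mu ⬝ᵥ l - nu ⬝ᵥ u + (lam - mu + nu) ⬝ᵥ ωi + ζ ⬝ᵥ γ ≤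
      ρ * N (ω - ωi) + c ⬝ᵥ x + θ := by
  have h_norm := Seminorm.dotProduct_sub_le hdual ω ωi
  have h_cost : c ⬝ᵥ x = lam ⬝ᵥ (A *ᵥ x) - ζ ⬝ᵥ (P *ᵥ x) := by
    rw [← hstat, sub_dotProduct, mulVec_transpose, dotProduct_mulVec, dotProduct_mulVec]
  have h_cut : ζ ⬝ᵥ (P *ᵥ x + γ) ≤ θ := dotProduct_le_of_forall_le hζ hζsum hθ
  have h_A := dotProduct_le_dotProduct_of_nonneg_left hA hlam
  have h_l := dotProduct_le_dotProduct_of_nonneg_left hl hmu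
  have h_u := dotProduct_le_dotProduct_of_nonneg_left hu hnu
  simp only [dotProduct_add, dotProduct_sub, add_dotProduct, sub_dotProduct, neg_dotProduct]
    at h_norm h_cut h_A ⊢
  linarith

theorem drr_continuous_weak_duality_general
    {dx dω K : ℕ}
    (A C : Matrix (Fin dω) (Fin dx) ℝ) (c : Fin dx → ℝ)
    (π : Fin K → Fin dx → ℝ) (γ : Fin K → ℝ)
    (l u ωi : Fin dω → ℝ) (xprev : Fin dx → ℝ)
    (n : Seminorm ℝ (Fin dω → ℝ))
    (ρ : ℝ)
    (lam mu nu : Fin dω → ℝ) (ζ : Fin K → ℝ)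
    (hlam : ∀ i, 0 ≤ lam i) (hmu : ∀ i, 0 ≤ mu i) (hnu : ∀ i, 0 ≤ nu i)
    (hζ : ∀ k, 0 ≤ ζ k)
    (hstat : ∀ j, (∑ i, A i j * lam i) - (∑ k, ζ k * π k j) = c j)
    (hζsum : (∑ k, ζ k) = 1)
    (hdualnorm : ∀ w : Fin dω → ℝ, (∑ i, (lam i - mu i + nu i) * w i) ≤ ρ * n w) :
    ∀ (x : Fin dx → ℝ) (ω : Fin dω → ℝ) (θ : ℝ),
      (∀ i, ω i - (∑ j, C i j * xprev j) ≤ ∑ j, A i j * x j) →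
      (∀ i, l i ≤ ω i) → (∀ i, ω i ≤ u i) →
      (∀ k, (∑ j, π k j * x j) + γ k ≤ θ) →
      (∑ i, (-(lam i)) * (∑ j, C i j * xprev j)) + (∑ i, mu i * l i) - (∑ i, nu i * u i)
          + (∑ i, (lam i - mu i + nu i) * ωi i) + (∑ k, ζ k * γ k) ≤
        ρ * n (ω - ωi) + (∑ j, c j * x j) + θ :=
  fun _ _ _ hA hl hu hθ =>
    lagrangian_weak_duality A C (of π) c xprev γ l u ωi n ρ lam mu nu ζ hlam hmu hnu hζ
      (funext hstat) hζsum hdualnorm hA hl hu hθ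

/-- Lagrangian weak duality for the per-scenario inner minimization of the
decision-dependent Wasserstein DRR dual: multipliers feasible to the dual system yield a
valid lower bound on the primal objective `ρ·n(ω − ω^i) + cᵀx + θ`. -/
theorem drr_continuous_weak_duality
    {dx dω K : ℕ} (hdx : 1 ≤ dx) (hdω : 1 ≤ dω) (hK : 1 ≤ K)
    (A C : Matrix (Fin dω) (Fin dx) ℝ) (c : Fin dx → ℝ)
    (π : Fin K → Fin dx → ℝ) (γ : Fin K → ℝ)
    (l u ωi : Fin dω → ℝ) (xprev : Fin dx → ℝ)
    (n : Seminorm ℝ (Fin dω → ℝ))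
    (ρ : ℝ) (hρ : 0 ≤ ρ)
    (lam mu nu : Fin dω → ℝ) (ζ : Fin K → ℝ)
    (hlam : ∀ i, 0 ≤ lam i) (hmu : ∀ i, 0 ≤ mu i) (hnu : ∀ i, 0 ≤ nu i)
    (hζ : ∀ k, 0 ≤ ζ k)
    (hstat : ∀ j, (∑ i, A i j * lam i) - (∑ k, ζ k * π k j) = c j)
    (hζsum : (∑ k, ζ k) = 1)
    (hdualnorm : ∀ w : Fin dω → ℝ, (∑ i, (lam i - mu i + nu i) * w i) ≤ ρ * n w) :
    ∀ (x : Fin dx → ℝ) (ω : Fin dω → ℝ) (θ : ℝ),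
      (∀ i, ω i - (∑ j, C i j * xprev j) ≤ ∑ j, A i j * x j) →
      (∀ i, l i ≤ ω i) → (∀ i, ω i ≤ u i) →
      (∀ k, (∑ j, π k j * x j) + γ k ≤ θ) →
      (∑ i, (-(lam i)) * (∑ j, C i j * xprev j)) + (∑ i, mu i * l i) - (∑ i, nu i * u i)
          + (∑ i, (lam i - mu i + nu i) * ωi i) + (∑ k, ζ k * γ k) ≤
        ρ * n (ω - ωi) + (∑ j, c j * x j) + θ :=
  drr_continuous_weak_duality_general A C c π γ l u ωi xprev n ρ lam mu nu ζ hlam hmu hnu hζ hstat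
    hζsum hdualnorm
end

section
/- Fix integers d_x, d_y ≥ 1 and K ≥ 0, a nonempty finite index set H, and for each h ∈ H an integer m_h ≥ 1, matrices A^h ∈ ℝ^{m_h×d_x}, B^h ∈ ℝ^{m_h×d_y}, C^h ∈ ℝ^{m_h×d_x}, and b^h ∈ ℝ^{m_h}; cut data π^k ∈ ℝ^{d_x}, γ^k ∈ ℝ for k = 1,…,K; and a binary vector x̄ ∈ {0,1}^{d_x}. Define the disjunctive set D := { (x, y, φ) ∈ ℝ^{d_x}_+ × ℝ^{d_y}_+ × ℝ_+ : φ ≥ (π^k)ᵀx + γ^k for all k, and there exists h ∈ H with A^h x + B^h y ≥ b^h − C^h x̄ }. Define the lifted polyhedron D̃ as the set of tuples (x, y, φ, (ζ^h_0, ζ^h_1, ζ^h_2, ζ^h_3, ζ^h_4)_{h∈H}) with ζ^h_0 ∈ ℝ_+, ζ^h_1, ζ^h_3 ∈ ℝ^{d_x}_+, ζ^h_2 ∈ ℝ^{d_y}_+, ζ^h_4 ∈ ℝ_+, x ∈ ℝ^{d_x}_+, y ∈ ℝ^{d_y}_+, φ ∈ ℝ_+, satisfying ∑_{h∈H} ζ^h_0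 = 1, ∑_h ζ^h_1 = x, ∑_h ζ^h_2 = y, ∑_h ζ^h_3 = x̄, ∑_h ζ^h_4 = φ, and for every h ∈ H: A^h ζ^h_1 + B^h ζ^h_2 + C^h ζ^h_3 − ζ^h_0 b^h ≥ 0 and ζ^h_4 − (π^k)ᵀ ζ^h_1 − γ^k ζ^h_0 ≥ 0 for all k. Assume: (i) for each h ∈ H, the polyhedron S^h(x̄) := { (x, y) ∈ ℝ^{d_x}_+ × ℝ^{d_y}_+ : A^h x + B^h y ≥ b^h − C^h x̄ } is nonempty and compact, and S^h(w) is compact for every w ∈ [0,1]^{d_x}; (ii) for each h ∈ H, every (x, y, w) with x, y, w ≥ 0 and A^h x + B^h y + C^h w ≥ b^h satisfies w ≤ 1 componentwise. Then conv(D) equals the image of D̃ under the projection (x, y, φ, ζ) ↦ (x, y, φ). -/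
/-!
A point of the lifted polyhedron is a sum over the disjuncts `h` of homogenized points
`(ζ₀ʰ, ζ₁ʰ, ζ₂ʰ, ζ₃ʰ, ζ₄ʰ)`. Assumption (ii), homogenized, gives `ζ₃ʰ ≤ ζ₀ʰ` componentwise, and
since the `ζ₃ʰ` add up to the binary vector `x̄` while the `ζ₀ʰ` add up to `1`, this forces
`ζ₃ʰ = ζ₀ʰ x̄`. Where `ζ₀ʰ > 0` the perspective `(ζ₁ʰ, ζ₂ʰ, ζ₄ʰ) / ζ₀ʰ` then lies in `D`; where
`ζ₀ʰ = 0`, `(ζ₁ʰ, ζ₂ʰ)` is a recession direction of the bounded nonempty polyhedron `Sʰ(x̄)`, hence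
zero, and the leftover `φ`-mass `ζ₄ʰ` can be added to every perspective because `D` is closed
upwards in `φ`. So the projection lies in `conv D`; the reverse inclusion holds because the
lifted polyhedron is convex and a point of `D` lifts by putting all weight on one disjunct.
-/

open Matrix Finset

lemma eq_zero_of_forall_add_smul_mem {E : Type*} [NormedAddCommGroup E] [NormedSpace ℝ E]
    {s : Set E} (hs : Bornology.IsBounded s) {x d : E}
    (hray : ∀ t : ℝ, 0 ≤ t → x + t • d ∈ s) : d = 0 := by
  obtain ⟨R, hR⟩ := hs.exists_norm_le
  have hx : ‖x‖ ≤ R := by simpa using hR _ (hray 0 le_rfl)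
  by_contra hd
  have hd : 0 < ‖d‖ := norm_pos_iff.mpr hd
  have ht : 0 ≤ (2 * R + 1) / ‖d‖ := div_nonneg (by linarith [norm_nonneg x]) hd.le
  have hbound : ‖((2 * R + 1) / ‖d‖) • d‖ ≤ R + R := calc
    _ = ‖(x + ((2 * R + 1) / ‖d‖) • d) - x‖ := by rw [add_sub_cancel_left]
    _ ≤ ‖x + ((2 * R + 1) / ‖d‖) • d‖ + ‖x‖ := norm_sub_le _ _
    _ ≤ R + R := add_le_add (hR _ (hray _ ht)) hx
  rw [norm_smul, Real.norm_of_nonneg ht, div_mul_cancel₀ _ hd.ne'] at hbound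
  linarith

lemma nonpos_of_forall_add_mul_le {a c M : ℝ} (h : ∀ t : ℝ, 0 ≤ t → a + t * c ≤ M) : c ≤ 0 := by
  by_contra! hc
  have := h ((M - a + 1) / c) (div_nonneg (by linarith [h 0 le_rfl]) hc.le)
  rw [div_mul_cancel₀ _ hc.ne'] at this
  linarith

lemma mul_eq_of_le_of_sum_eq {ι : Type*} [Fintype ι] {f g : ι → ℝ} {c : ℝ}
    (hf : ∀ i, 0 ≤ f i) (hfg : ∀ i, f i ≤ g i) (hg : ∑ i, g i = 1) (hfc : ∑ i, f i = c)
    (hc : c = 0 ∨ c = 1) (i : ι) : f i = g i * c := by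
  rcases hc with rfl | rfl
  · rw [mul_zero]
    exact (sum_eq_zero_iff_of_nonneg fun i _ => hf i).mp hfc i (mem_univ i)
  · rw [mul_one]
    exact (sum_eq_sum_iff_of_le fun i _ => hfg i).mp (hfc.trans hg.symm) i (mem_univ i)

lemma smul_inv_smul_of_imp {K E : Type*} [GroupWithZero K] [AddMonoid E] [DistribMulAction K E]
    {a : K} {x : E} (h : a = 0 → x = 0) : a • a⁻¹ • x = x := by
  rcases eq_or_ne a 0 with rfl | ha
  · rw [h rfl, smul_zero, smul_zero]
  · exact smul_inv_smul₀ ha x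

section Disjunct

variable {m n p : Type*} [Fintype n] [Fintype p]
  (A : Matrix m n ℝ) (B : Matrix m p ℝ) (C : Matrix m n ℝ) (b : m → ℝ)

def disjunctPolyhedron (w : n → ℝ) : Set ((n → ℝ) × (p → ℝ)) :=
  {xy | (∀ j, 0 ≤ xy.1 j) ∧ (∀ j, 0 ≤ xy.2 j) ∧ b - C *ᵥ w ≤ A *ᵥ xy.1 + B *ᵥ xy.2}

variable {A B C b}

lemma eq_zero_of_nonneg_mulVec_add_mulVec {w : n → ℝ}
    (hne : (disjunctPolyhedron A B C b w).Nonempty)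
    (hbdd : Bornology.IsBounded (disjunctPolyhedron A B C b w)) {u : n → ℝ} {v : p → ℝ}
    (hu : 0 ≤ u) (hv : 0 ≤ v) (huv : 0 ≤ A *ᵥ u + B *ᵥ v) : (u, v) = 0 := by
  obtain ⟨xy, hx, hy, hxy⟩ := hne
  refine eq_zero_of_forall_add_smul_mem hbdd (x := xy) fun t ht => ⟨?_, ?_, ?_⟩
  · exact add_nonneg hx (smul_nonneg ht hu)
  · exact add_nonneg hy (smul_nonneg ht hv)
  · calc b - C *ᵥ w ≤ A *ᵥ xy.1 + B *ᵥ xy.2 := hxy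
      _ ≤ A *ᵥ xy.1 + B *ᵥ xy.2 + t • (A *ᵥ u + B *ᵥ v) :=
        le_add_of_nonneg_right (smul_nonneg ht huv)
      _ = _ := by simp only [Prod.fst_add, Prod.snd_add, Prod.smul_fst, Prod.smul_snd,
          mulVec_add, mulVec_smul, smul_add]; abel

lemma le_of_smul_le_mulVec_add_mulVec_add_mulVec
    (hfeas : ∃ x y w, 0 ≤ x ∧ 0 ≤ y ∧ 0 ≤ w ∧ b ≤ A *ᵥ x + B *ᵥ y + C *ᵥ w)
    (hbox : ∀ x y w, 0 ≤ x → 0 ≤ y → 0 ≤ w → b ≤ A *ᵥ x + B *ᵥ y + C *ᵥ w → ∀ j, w j ≤ 1)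
    {l : ℝ} (hl : 0 ≤ l) {u : n → ℝ} {v : p → ℝ} {w : n → ℝ} (hu : 0 ≤ u) (hv : 0 ≤ v)
    (hw : 0 ≤ w) (h : l • b ≤ A *ᵥ u + B *ᵥ v + C *ᵥ w) (j : n) : w j ≤ l := by
  rcases hl.eq_or_lt with rfl | hl
  · obtain ⟨x, y, w₀, hx, hy, hw₀, hfeas⟩ := hfeas
    refine nonpos_of_forall_add_mul_le (a := w₀ j) (M := 1) fun t ht => ?_
    refine hbox (x + t • u) (y + t • v) (w₀ + t • w) (add_nonneg hx (smul_nonneg ht hu))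
      (add_nonneg hy (smul_nonneg ht hv)) (add_nonneg hw₀ (smul_nonneg ht hw)) ?_ j
    calc b ≤ A *ᵥ x + B *ᵥ y + C *ᵥ w₀ := hfeas
      _ ≤ A *ᵥ x + B *ᵥ y + C *ᵥ w₀ + t • (A *ᵥ u + B *ᵥ v + C *ᵥ w) :=
        le_add_of_nonneg_right (smul_nonneg ht (by simpa using h))
      _ = _ := by simp only [mulVec_add, mulVec_smul, smul_add]; abel
  · have := hbox (l⁻¹ • u) (l⁻¹ • v) (l⁻¹ • w) (smul_nonneg (inv_nonneg.2 hl.le) hu)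
      (smul_nonneg (inv_nonneg.2 hl.le) hv) (smul_nonneg (inv_nonneg.2 hl.le) hw) ?_ j
    · rwa [Pi.smul_apply, smul_eq_mul, inv_mul_le_iff₀ hl, mul_one] at this
    · calc b = l⁻¹ • l • b := (inv_smul_smul₀ hl.ne' b).symm
        _ ≤ l⁻¹ • (A *ᵥ u + B *ᵥ v + C *ᵥ w) :=
          smul_le_smul_of_nonneg_left h (inv_nonneg.2 hl.le)
        _ = _ := by simp only [mulVec_smul, smul_add]

end Disjunct

section Disjunctive

variable {H : Type*} {m : H → Type*} {n p κ : Type*} [Fintype n] [Fintype p]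
  (A : ∀ h, Matrix (m h) n ℝ) (B : ∀ h, Matrix (m h) p ℝ) (C : ∀ h, Matrix (m h) n ℝ)
  (b : ∀ h, m h → ℝ) (π : κ → n → ℝ) (γ : κ → ℝ) (xbar : n → ℝ)

def disjunctiveSet : Set ((n → ℝ) × (p → ℝ) × ℝ) :=
  {z | (∀ j, 0 ≤ z.1 j) ∧ (∀ j, 0 ≤ z.2.1 j) ∧ 0 ≤ z.2.2 ∧
    (∀ k, (∑ j, π k j * z.1 j) + γ k ≤ z.2.2) ∧
    ∃ h : H, b h - (C h).mulVec xbar ≤ (A h).mulVec z.1 + (B h).mulVec z.2.1}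

def balasProjection [Fintype H] : Set ((n → ℝ) × (p → ℝ) × ℝ) :=
  {z | (∀ j, 0 ≤ z.1 j) ∧ (∀ j, 0 ≤ z.2.1 j) ∧ 0 ≤ z.2.2 ∧
    ∃ (ζ0 : H → ℝ) (ζ1 : H → n → ℝ) (ζ2 : H → p → ℝ) (ζ3 : H → n → ℝ) (ζ4 : H → ℝ),
      (∀ h, 0 ≤ ζ0 h) ∧ (∀ h j, 0 ≤ ζ1 h j) ∧ (∀ h j, 0 ≤ ζ2 h j) ∧
      (∀ h j, 0 ≤ ζ3 h j) ∧ (∀ h, 0 ≤ ζ4 h) ∧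
      (∑ h, ζ0 h) = 1 ∧
      (∀ j, (∑ h, ζ1 h j) = z.1 j) ∧
      (∀ j, (∑ h, ζ2 h j) = z.2.1 j) ∧
      (∀ j, (∑ h, ζ3 h j) = xbar j) ∧
      (∑ h, ζ4 h) = z.2.2 ∧
      (∀ h, 0 ≤ (A h).mulVec (ζ1 h) + (B h).mulVec (ζ2 h) + (C h).mulVec (ζ3 h) - ζ0 h • b h) ∧
      (∀ h, ∀ k, 0 ≤ ζ4 h - (∑ j, π k j * ζ1 h j) - γ k * ζ0 h)}

variable {A B C b π γ xbar}

lemma disjunctiveSet_subset_balasProjection [Fintype H] (hxbar : ∀ j, 0 ≤ xbar j) :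
    disjunctiveSet A B C b π γ xbar ⊆ balasProjection A B C b π γ xbar := by
  classical
  rintro z ⟨hx, hy, hφ, hcut, h₀, hh₀⟩
  refine ⟨hx, hy, hφ, Pi.single h₀ 1, Pi.single h₀ z.1, Pi.single h₀ z.2.1, Pi.single h₀ xbar,
    Pi.single h₀ z.2.2, fun h => ?_, fun h => ?_, fun h => ?_, fun h => ?_, fun h => ?_,
    ?_, ?_, ?_, ?_, ?_, fun h => ?_, fun h => ?_⟩
  any_goals simp only [← Finset.sum_apply, sum_pi_single', mem_univ, if_true, implies_true]
  all_goals rcases eq_or_ne h h₀ with rfl | hh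
  all_goals simp [*, le_sub_iff_add_le', ← sub_le_iff_le_add]

lemma convex_balasProjection [Fintype H] : Convex ℝ (balasProjection A B C b π γ xbar) := by
  rintro z ⟨hx, hy, hφ, ζ0, ζ1, ζ2, ζ3, ζ4, hζ0, hζ1, hζ2, hζ3, hζ4, hs0, hs1, hs2, hs3, hs4, hA,
    hcut⟩ z' ⟨hx', hy', hφ', η0, η1, η2, η3, η4, hη0, hη1, hη2, hη3, hη4, ht0, ht1, ht2, ht3, ht4,
    hA', hcut'⟩ s t hs ht hst
  have comb {a a' : ℝ} (ha : 0 ≤ a) (ha' : 0 ≤ a') : 0 ≤ s * a + t * a' :=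
    add_nonneg (mul_nonneg hs ha) (mul_nonneg ht ha')
  refine ⟨fun j => ?_, fun j => ?_, ?_, s • ζ0 + t • η0, s • ζ1 + t • η1, s • ζ2 + t • η2,
    s • ζ3 + t • η3, s • ζ4 + t • η4, fun h => ?_, fun h j => ?_, fun h j => ?_, fun h j => ?_,
    fun h => ?_, ?_, fun j => ?_, fun j => ?_, fun j => ?_, ?_, fun h => ?_, fun h k => ?_⟩
  all_goals simp only [Prod.fst_add, Prod.snd_add, Prod.smul_fst, Prod.smul_snd, Pi.add_apply,
    Pi.smul_apply, smul_eq_mul, sum_add_distrib, ← mul_sum]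
  · exact comb (hx j) (hx' j)
  · exact comb (hy j) (hy' j)
  · exact comb hφ hφ'
  · exact comb (hζ0 h) (hη0 h)
  · exact comb (hζ1 h j) (hη1 h j)
  · exact comb (hζ2 h j) (hη2 h j)
  · exact comb (hζ3 h j) (hη3 h j)
  · exact comb (hζ4 h) (hη4 h)
  · rw [hs0, ht0, mul_one, mul_one, hst]
  · rw [hs1, ht1]
  · rw [hs2, ht2]
  · rw [hs3, ht3, ← add_mul, hst, one_mul]
  · rw [hs4, ht4]
  · refine (add_nonneg (smul_nonneg hs (hA h)) (smul_nonneg ht (hA' h))).trans_eq ?_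
    simp only [mulVec_add, mulVec_smul]
    module
  · have hsum : ∑ j, π k j * (s * ζ1 h j + t * η1 h j) =
        s * ∑ j, π k j * ζ1 h j + t * ∑ j, π k j * η1 h j := by
      simp only [mul_sum, ← sum_add_distrib]; congr! 1 with j; ring
    linarith [comb (hcut h k) (hcut' h k)]

lemma perspective_mem_disjunctiveSet {h : H} {l φ s : ℝ} (hl : 0 < l) {u : n → ℝ} {v : p → ℝ}
    (hu : 0 ≤ u) (hv : 0 ≤ v) (hφ : 0 ≤ φ) (hs : 0 ≤ s)
    (hA : 0 ≤ A h *ᵥ u + B h *ᵥ v + C h *ᵥ (l • xbar) - l • b h)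
    (hcut : ∀ k, 0 ≤ φ - ∑ j, π k j * u j - γ k * l) :
    (l⁻¹ • u, l⁻¹ • v, l⁻¹ * φ + s) ∈ disjunctiveSet A B C b π γ xbar := by
  have hl' : 0 ≤ l⁻¹ := inv_nonneg.2 hl.le
  refine ⟨smul_nonneg hl' hu, smul_nonneg hl' hv, add_nonneg (mul_nonneg hl' hφ) hs,
    fun k => ?_, h, ?_⟩
  · have hscale : ∑ j, π k j * (l⁻¹ • u) j + γ k = l⁻¹ * (∑ j, π k j * u j + γ k * l) := by
      simp only [Pi.smul_apply, smul_eq_mul, mul_add, mul_sum, mul_left_comm l⁻¹,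
        inv_mul_cancel₀ hl.ne', mul_one]
    calc ∑ j, π k j * (l⁻¹ • u) j + γ k
        = l⁻¹ * (∑ j, π k j * u j + γ k * l) := hscale
      _ ≤ l⁻¹ * φ := mul_le_mul_of_nonneg_left (by linarith [hcut k]) hl'
      _ ≤ l⁻¹ * φ + s := le_add_of_nonneg_right hs
  · rw [← sub_nonneg]
    refine (smul_nonneg hl' hA).trans_eq ?_
    simp only [mulVec_smul, smul_sub, smul_add, smul_smul, inv_mul_cancel₀ hl.ne', one_smul]
    abel

lemma balasProjection_subset_convexHull [Fintype H] (hxbar : ∀ j, xbar j = 0 ∨ xbar j = 1)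
    (hne : ∀ h, (disjunctPolyhedron (A h) (B h) (C h) (b h) xbar).Nonempty)
    (hbdd : ∀ h, Bornology.IsBounded (disjunctPolyhedron (A h) (B h) (C h) (b h) xbar))
    (hbox : ∀ h x y w, 0 ≤ x → 0 ≤ y → 0 ≤ w → b h ≤ A h *ᵥ x + B h *ᵥ y + C h *ᵥ w →
      ∀ j, w j ≤ 1) :
    balasProjection A B C b π γ xbar ⊆ convexHull ℝ (disjunctiveSet A B C b π γ xbar) := by
  rintro z ⟨-, -, -, ζ0, ζ1, ζ2, ζ3, ζ4, hζ0, hζ1, hζ2, hζ3, hζ4, hs0, hs1, hs2, hs3, hs4, hA,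
    hcut⟩
  have hxbar₀ : 0 ≤ xbar := fun j => by rcases hxbar j with e | e <;> simp [e]
  have hζ3_eq : ∀ h, ζ3 h = ζ0 h • xbar := by
    have hle : ∀ h j, ζ3 h j ≤ ζ0 h := fun h =>
      have ⟨xy, hx, hy, hxy⟩ := hne h
      le_of_smul_le_mulVec_add_mulVec_add_mulVec
        ⟨xy.1, xy.2, xbar, hx, hy, hxbar₀, sub_le_iff_le_add.mp hxy⟩
        (hbox h) (hζ0 h) (hζ1 h) (hζ2 h) (hζ3 h) (sub_nonneg.mp (hA h))
    intro h
    ext j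
    exact mul_eq_of_le_of_sum_eq (fun h => hζ3 h j) (fun h => hle h j) hs0 (hs3 j) (hxbar j) h
  have hvanish : ∀ h, ζ0 h = 0 → ζ1 h = 0 ∧ ζ2 h = 0 := fun h h0 =>
    Prod.mk_eq_zero.mp (eq_zero_of_nonneg_mulVec_add_mulVec (hne h) (hbdd h) (hζ1 h) (hζ2 h)
      (by simpa [h0, hζ3_eq] using hA h))
  -- `1 - a * a⁻¹` is the indicator of `a = 0`: `s` is the `φ`-mass of the weightless disjuncts.
  set s := ∑ h, (1 - ζ0 h * (ζ0 h)⁻¹) * ζ4 h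
  have hs : 0 ≤ s := sum_nonneg fun h _ =>
    mul_nonneg (by rcases eq_or_ne (ζ0 h) 0 with e | e <;> simp [e]) (hζ4 h)
  have hmem : ∀ h, ζ0 h ≠ 0 → ((ζ0 h)⁻¹ • ζ1 h, (ζ0 h)⁻¹ • ζ2 h, (ζ0 h)⁻¹ * ζ4 h + s) ∈
      disjunctiveSet A B C b π γ xbar := fun h h0 =>
    perspective_mem_disjunctiveSet ((hζ0 h).lt_of_ne' h0) (hζ1 h) (hζ2 h) (hζ4 h) hs
      (hζ3_eq h ▸ hA h) (hcut h)
  have hz : ∑ h, ζ0 h • ((ζ0 h)⁻¹ • ζ1 h, (ζ0 h)⁻¹ • ζ2 h, (ζ0 h)⁻¹ * ζ4 h + s) = z := by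
    refine Prod.ext ?_ (Prod.ext ?_ ?_)
    · simp only [Prod.fst_sum, Prod.smul_fst]
      simp only [smul_inv_smul_of_imp fun h0 => (hvanish _ h0).1]
      ext j
      rw [Finset.sum_apply, hs1]
    · simp only [Prod.snd_sum, Prod.fst_sum, Prod.smul_snd, Prod.smul_fst]
      simp only [smul_inv_smul_of_imp fun h0 => (hvanish _ h0).2]
      ext j
      rw [Finset.sum_apply, hs2]
    · simp only [Prod.snd_sum, Prod.smul_snd, smul_eq_mul, s, mul_add, sum_add_distrib,
        ← sum_mul, hs0, one_mul, sub_mul, sum_sub_distrib, mul_assoc, hs4]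
      ring
  rw [← hz, ← finsum_eq_sum_of_fintype]
  exact (convex_convexHull ℝ _).finsum_mem hζ0 (by rwa [finsum_eq_sum_of_fintype])
    fun h h0 => subset_convexHull ℝ _ (hmem h h0)

end Disjunctive

theorem convexHull_disjunctive_tight_extended_formulation_general
    {dx dy K : ℕ}
    {H : Type*} [Fintype H]
    (mh : H → ℕ)
    (A : ∀ h : H, Matrix (Fin (mh h)) (Fin dx) ℝ)
    (B : ∀ h : H, Matrix (Fin (mh h)) (Fin dy) ℝ)
    (C : ∀ h : H, Matrix (Fin (mh h)) (Fin dx) ℝ)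
    (b : ∀ h : H, Fin (mh h) → ℝ)
    (π : Fin K → Fin dx → ℝ) (γ : Fin K → ℝ)
    (xbar : Fin dx → ℝ) (hxbar : ∀ j, xbar j = 0 ∨ xbar j = 1)
    -- the per-disjunct polyhedra S^h(w)
    (S : H → (Fin dx → ℝ) → Set ((Fin dx → ℝ) × (Fin dy → ℝ)))
    (hSdef : ∀ h w, S h w = {xy : (Fin dx → ℝ) × (Fin dy → ℝ) |
        (∀ j, 0 ≤ xy.1 j) ∧ (∀ j, 0 ≤ xy.2 j) ∧
        b h - (C h).mulVec w ≤ (A h).mulVec xy.1 + (B h).mulVec xy.2})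
    -- assumption (i): S^h(x̄) nonempty and compact; S^h(w) compact for all w ∈ [0,1]^{dx}
    (hSne : ∀ h, (S h xbar).Nonempty)
    (hScompact_xbar : ∀ h, IsCompact (S h xbar))
    -- assumption (ii): feasibility with nonnegative `w` forces `w ≤ 1`
    (hbox : ∀ h, ∀ x : Fin dx → ℝ, ∀ y : Fin dy → ℝ, ∀ w : Fin dx → ℝ,
        (∀ j, 0 ≤ x j) → (∀ j, 0 ≤ y j) → (∀ j, 0 ≤ w j) →
        b h ≤ (A h).mulVec x + (B h).mulVec y + (C h).mulVec w →
        ∀ j, w j ≤ 1)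
    -- the disjunctive set D
    (D : Set ((Fin dx → ℝ) × (Fin dy → ℝ) × ℝ))
    (hDdef : D = {z : (Fin dx → ℝ) × (Fin dy → ℝ) × ℝ |
        (∀ j, 0 ≤ z.1 j) ∧ (∀ j, 0 ≤ z.2.1 j) ∧ 0 ≤ z.2.2 ∧
        (∀ k, (∑ j, π k j * z.1 j) + γ k ≤ z.2.2) ∧
        ∃ h : H, b h - (C h).mulVec xbar ≤ (A h).mulVec z.1 + (B h).mulVec z.2.1}) :
    convexHull ℝ D = {z : (Fin dx → ℝ) × (Fin dy → ℝ) × ℝ |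
      (∀ j, 0 ≤ z.1 j) ∧ (∀ j, 0 ≤ z.2.1 j) ∧ 0 ≤ z.2.2 ∧
      ∃ (ζ0 : H → ℝ) (ζ1 : H → Fin dx → ℝ) (ζ2 : H → Fin dy → ℝ)
        (ζ3 : H → Fin dx → ℝ) (ζ4 : H → ℝ),
        (∀ h, 0 ≤ ζ0 h) ∧ (∀ h j, 0 ≤ ζ1 h j) ∧ (∀ h j, 0 ≤ ζ2 h j) ∧
        (∀ h j, 0 ≤ ζ3 h j) ∧ (∀ h, 0 ≤ ζ4 h) ∧
        (∑ h, ζ0 h) = 1 ∧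
        (∀ j, (∑ h, ζ1 h j) = z.1 j) ∧
        (∀ j, (∑ h, ζ2 h j) = z.2.1 j) ∧
        (∀ j, (∑ h, ζ3 h j) = xbar j) ∧
        (∑ h, ζ4 h) = z.2.2 ∧
        (∀ h, 0 ≤ (A h).mulVec (ζ1 h) + (B h).mulVec (ζ2 h) + (C h).mulVec (ζ3 h)
            - ζ0 h • b h) ∧
        (∀ h, ∀ k, 0 ≤ ζ4 h - (∑ j, π k j * ζ1 h j) - γ k * ζ0 h)} := by
  have hS : ∀ h, S h xbar = disjunctPolyhedron (A h) (B h) (C h) (b h) xbar :=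
    fun h => hSdef h xbar
  have hxbar₀ : ∀ j, 0 ≤ xbar j := fun j => by rcases hxbar j with e | e <;> simp [e]
  subst hDdef
  refine (convexHull_min (disjunctiveSet_subset_balasProjection hxbar₀)
    convex_balasProjection).antisymm ?_
  exact balasProjection_subset_convexHull hxbar (fun h => hS h ▸ hSne h)
    (fun h => (hS h ▸ hScompact_xbar h).isBounded) hbox

/-- Proposition 2: the convex hull of the disjunctive stage-feasible set `D`
equals the projection of the lifted (Balas) polyhedron `D̃` onto the original variables. -/
theorem convexHull_disjunctive_tight_extended_formulation
    {dx dy K : ℕ} (hdx : 1 ≤ dx) (hdy : 1 ≤ dy)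
    {H : Type*} [Fintype H] [Nonempty H]
    (mh : H → ℕ) (hmh : ∀ h, 1 ≤ mh h)
    (A : ∀ h : H, Matrix (Fin (mh h)) (Fin dx) ℝ)
    (B : ∀ h : H, Matrix (Fin (mh h)) (Fin dy) ℝ)
    (C : ∀ h : H, Matrix (Fin (mh h)) (Fin dx) ℝ)
    (b : ∀ h : H, Fin (mh h) → ℝ)
    (π : Fin K → Fin dx → ℝ) (γ : Fin K → ℝ)
    (xbar : Fin dx → ℝ) (hxbar : ∀ j, xbar j = 0 ∨ xbar j = 1)
    -- the per-disjunct polyhedra S^h(w)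
    (S : H → (Fin dx → ℝ) → Set ((Fin dx → ℝ) × (Fin dy → ℝ)))
    (hSdef : ∀ h w, S h w = {xy : (Fin dx → ℝ) × (Fin dy → ℝ) |
        (∀ j, 0 ≤ xy.1 j) ∧ (∀ j, 0 ≤ xy.2 j) ∧
        b h - (C h).mulVec w ≤ (A h).mulVec xy.1 + (B h).mulVec xy.2})
    -- assumption (i): S^h(x̄) nonempty and compact; S^h(w) compact for all w ∈ [0,1]^{dx}
    (hSne : ∀ h, (S h xbar).Nonempty)
    (hScompact_xbar : ∀ h, IsCompact (S h xbar))
    (hScompact : ∀ h, ∀ w : Fin dx → ℝ, (∀ j, 0 ≤ w j ∧ w j ≤ 1) → IsCompact (S h w))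
    -- assumption (ii): feasibility with nonnegative `w` forces `w ≤ 1`
    (hbox : ∀ h, ∀ x : Fin dx → ℝ, ∀ y : Fin dy → ℝ, ∀ w : Fin dx → ℝ,
        (∀ j, 0 ≤ x j) → (∀ j, 0 ≤ y j) → (∀ j, 0 ≤ w j) →
        b h ≤ (A h).mulVec x + (B h).mulVec y + (C h).mulVec w →
        ∀ j, w j ≤ 1)
    -- the disjunctive set D
    (D : Set ((Fin dx → ℝ) × (Fin dy → ℝ) × ℝ))
    (hDdef : D = {z : (Fin dx → ℝ) × (Fin dy → ℝ) × ℝ |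
        (∀ j, 0 ≤ z.1 j) ∧ (∀ j, 0 ≤ z.2.1 j) ∧ 0 ≤ z.2.2 ∧
        (∀ k, (∑ j, π k j * z.1 j) + γ k ≤ z.2.2) ∧
        ∃ h : H, b h - (C h).mulVec xbar ≤ (A h).mulVec z.1 + (B h).mulVec z.2.1}) :
    convexHull ℝ D = {z : (Fin dx → ℝ) × (Fin dy → ℝ) × ℝ |
      (∀ j, 0 ≤ z.1 j) ∧ (∀ j, 0 ≤ z.2.1 j) ∧ 0 ≤ z.2.2 ∧
      ∃ (ζ0 : H → ℝ) (ζ1 : H → Fin dx → ℝ) (ζ2 : H → Fin dy → ℝ)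
        (ζ3 : H → Fin dx → ℝ) (ζ4 : H → ℝ),
        (∀ h, 0 ≤ ζ0 h) ∧ (∀ h j, 0 ≤ ζ1 h j) ∧ (∀ h j, 0 ≤ ζ2 h j) ∧
        (∀ h j, 0 ≤ ζ3 h j) ∧ (∀ h, 0 ≤ ζ4 h) ∧
        (∑ h, ζ0 h) = 1 ∧
        (∀ j, (∑ h, ζ1 h j) = z.1 j) ∧
        (∀ j, (∑ h, ζ2 h j) = z.2.1 j) ∧
        (∀ j, (∑ h, ζ3 h j) = xbar j) ∧
        (∑ h, ζ4 h) = z.2.2 ∧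
        (∀ h, 0 ≤ (A h).mulVec (ζ1 h) + (B h).mulVec (ζ2 h) + (C h).mulVec (ζ3 h)
            - ζ0 h • b h) ∧
        (∀ h, ∀ k, 0 ≤ ζ4 h - (∑ j, π k j * ζ1 h j) - γ k * ζ0 h)} :=
  convexHull_disjunctive_tight_extended_formulation_general mh A B C b π γ xbar hxbar S hSdef hSne
    hScompact_xbar hbox D hDdef
end
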